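/- arXiv:cs/0608101 — 3 statements merged into one kernel-verified Lean document; each statement's English description precedes it below -/
import Mathlib

section
/- Let H = (V,U;A) be a semicomplete bipartite digraph that contains no induced subdigraph belonging to the family HFORB and no induced directed 4-cycle, and suppose that for every pair v, v' ∈ V we have N^+(v) ⊆ N^+(v') or N^+(v') ⊆ N^+(v). Call v, v' ∈ V similar if N^+(v) = N^+(v'), let V_1,…,V_s be the similarity classes of V, indexed so that N^+(V_1) ⊊ N^+(V_2) ⊊ … ⊊ N^+(V_s), and set U_1 = N^+(V_1) and U_i = N^+(V_i) \ (U_1 ∪ … ∪ U_{i−1}) for i > 1. Then whenever u ∈ U_i, v ∈ V_j, j > i and uv ∈ A(H), one has: u' v ∈ A(H) for every u' ∈ U_r with r > i, and u v' ∈ A(H) for every v' ∈ V_t with t < j. -/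
namespace SBD

/-- `F` has an induced copy in the digraph with arc relation `A`. -/
def InducedCopy {β W : Type*} (F : β → β → Prop) (A : W → W → Prop) : Prop :=
  ∃ f : β → W, Function.Injective f ∧ ∀ a b, F a b ↔ A (f a) (f b)

/-- The undirected graph `E` is isomorphic to the underlying graph of the subdigraph of
`R` induced by the image of some injection. -/
def GraphCopy {β W : Type*} (E : β → β → Prop) (R : W → W → Prop) : Prop :=
  ∃ f : β → W, Function.Injective f ∧ ∀ a b, E a b ↔ (R (f a) (f b) ∨ R (f b) (f a))

/-- C4' : vertices x1=0, x2=1, y1=2, y2=3, arcs {x1y1, y1x2, x2y2, y2x1, y1x1}. -/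
def C4P : Fin 4 → Fin 4 → Prop := fun a b =>
  (a, b) ∈ ([(0,2),(2,1),(1,3),(3,0),(2,0)] : List (Fin 4 × Fin 4))

/-- C4'' : C4' plus the arc x2y1. -/
def C4PP : Fin 4 → Fin 4 → Prop := fun a b =>
  (a, b) ∈ ([(0,2),(2,1),(1,3),(3,0),(2,0),(1,2)] : List (Fin 4 × Fin 4))

/-- H* : vertices x1=0, x2=1, y1=2, y2=3, y3=4, arcs {x1y1,y1x2,x2y2,y2x1,x1y3,x2y3}. -/
def Hstar : Fin 5 → Fin 5 → Prop := fun a b =>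
  (a, b) ∈ ([(0,2),(2,1),(1,3),(3,0),(0,4),(1,4)] : List (Fin 5 × Fin 5))

/-- N1 : vertices x1=0,x2=1,x3=2,y1=3,y2=4,y3=5. -/
def N1 : Fin 6 → Fin 6 → Prop := fun a b =>
  (a, b) ∈ ([(0,3),(3,0),(1,4),(4,1),(2,5),(5,2),(3,1),(3,2),(0,4),(0,5),(2,4),(1,5)] :
    List (Fin 6 × Fin 6))

/-- N2 : N1 with the arc y1x1 removed. -/
def N2 : Fin 6 → Fin 6 → Prop := fun a b =>
  (a, b) ∈ ([(0,3),(1,4),(4,1),(2,5),(5,2),(3,1),(3,2),(0,4),(0,5),(2,4),(1,5)] :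
    List (Fin 6 × Fin 6))

/-- symmetric (undirected) edge relation generated by a list of pairs -/
def symE {n : ℕ} (l : List (Fin n × Fin n)) : Fin n → Fin n → Prop :=
  fun a b => (a, b) ∈ l ∨ (b, a) ∈ l

/-- bipartite claw: x1=0,x2=1,x3=2,x4=3,y1=4,y2=5,y3=6. -/
def clawE : Fin 7 → Fin 7 → Prop := symE [(3,4),(4,0),(3,5),(5,1),(3,6),(6,2)]

/-- bipartite net -/
def netE : Fin 7 → Fin 7 → Prop := symE [(0,4),(4,2),(4,3),(2,5),(3,5),(5,1),(6,3)]

/-- bipartite tent -/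
def tentE : Fin 7 → Fin 7 → Prop := symE [(4,0),(4,1),(4,2),(4,3),(0,5),(0,6),(3,5),(1,6)]

/-- undirected cycle on `n` vertices -/
def cycE (n : ℕ) : ZMod n → ZMod n → Prop := fun a b => b = a + 1 ∨ a = b + 1

/-- directed cycle on `n` vertices -/
def dirCyc (n : ℕ) : ZMod n → ZMod n → Prop := fun a b => b = a + 1

/-- arcs of H^→ : from the V-side (σ = false) to the U-side (σ = true) -/
def fwdArc {W : Type*} (σ : W → Bool) (A : W → W → Prop) : W → W → Prop :=
  fun x y => A x y ∧ σ x = false ∧ σ y = true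

/-- arcs of H^← : from the U-side (σ = true) to the V-side (σ = false) -/
def bwdArc {W : Type*} (σ : W → Bool) (A : W → W → Prop) : W → W → Prop :=
  fun x y => A x y ∧ σ x = true ∧ σ y = false

/-- arcs of H^↔ : arcs lying on 2-cycles -/
def symArc {W : Type*} (A : W → W → Prop) : W → W → Prop :=
  fun x y => A x y ∧ A y x

/-- underlying undirected graph of H^→ -/
def unFwd {W : Type*} (σ : W → Bool) (A : W → W → Prop) : W → W → Prop :=
  fun x y => fwdArc σ A x y ∨ fwdArc σ A y x

/-- The bipartite digraph `(σ, A)` contains an induced subdigraph from the family HFORB. -/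
def ContainsHFORB {W : Type*} (σ : W → Bool) (A : W → W → Prop) : Prop :=
  InducedCopy C4P A ∨ InducedCopy (flip C4P) A ∨
  InducedCopy C4PP A ∨ InducedCopy (flip C4PP) A ∨
  InducedCopy Hstar A ∨ InducedCopy (flip Hstar) A ∨
  InducedCopy N1 A ∨ InducedCopy (flip N1) A ∨
  InducedCopy N2 A ∨ InducedCopy (flip N2) A ∨
  (∃ R ∈ [fwdArc σ A, bwdArc σ A, symArc A],
    GraphCopy clawE R ∨ GraphCopy netE R ∨ GraphCopy tentE R ∨
    ∃ k : ℕ, 3 ≤ k ∧ GraphCopy (cycE (2 * k)) R)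

/-- `(σ, A)` is a semicomplete bipartite digraph with partite sets `σ = false` (the set V)
and `σ = true` (the set U). -/
def SemicompleteBipartite {W : Type*} (σ : W → Bool) (A : W → W → Prop) : Prop :=
  (∀ x y, A x y → σ x ≠ σ y) ∧ (∀ x y, σ x ≠ σ y → A x y ∨ A y x)

/-- the concatenated ordering of the classes `V_j` and `V_{j+1}`. -/
def concatOrd {W : Type*} {k : ℕ} {part : W → ZMod k} {len : ZMod k → ℕ}
    (ord : (j : ZMod k) → Fin (len j) ≃ {x : W // part x = j}) (j : ZMod k) :
    Fin (len j + len (j + 1)) → W :=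
  Fin.addCases (fun i => ((ord j) i).1) (fun i => ((ord (j + 1)) i).1)

/-- `A` has a `k`-Min-Max ordering. -/
def HasKMinMaxOrdering {W : Type*} (A : W → W → Prop) (k : ℕ) : Prop :=
  ∃ (part : W → ZMod k) (len : ZMod k → ℕ)
    (ord : (j : ZMod k) → Fin (len j) ≃ {x : W // part x = j}),
    (∀ x y, A x y → part y = part x + 1) ∧
    ∀ (j : ZMod k) (i₁ i₂ i₃ i₄ : Fin (len j + len (j + 1))),
      A (concatOrd ord j i₁) (concatOrd ord j i₂) →
      A (concatOrd ord j i₃) (concatOrd ord j i₄) →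
      A (concatOrd ord j (min i₁ i₃)) (concatOrd ord j (min i₂ i₄)) ∧
      A (concatOrd ord j (max i₁ i₃)) (concatOrd ord j (max i₂ i₄))

/- Every arc leaving a class `V_j` also leaves each later class, no arc goes from `V_j` into a
later `U_r`, and by semicompleteness a missing arc is present reversed. So if either claim failed,
`u → v` would lie on a directed 4-cycle in which `v → u` doubles one arc and, of the other arcs,
at most one neighbour of it is doubled too: an induced C4' or C4''. -/

section FourCycle

variable {W : Type*} {σ : W → Bool} {A : W → W → Prop}

lemma not_arc_of_side_eq (hbip : ∀ x y, A x y → σ x ≠ σ y) {x y : W} (h : σ x = σ y) :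
    ¬ A x y :=
  fun hxy => hbip x y hxy h

lemma side_eq_of_arc_of_arc (hbip : ∀ x y, A x y → σ x ≠ σ y) {x y z : W}
    (hxy : A x y) (hyz : A y z) : σ x = σ z := by
  have h₁ := hbip x y hxy
  have h₂ := hbip y z hyz
  revert h₁ h₂
  cases σ x <;> cases σ y <;> cases σ z <;> decide

lemma inducedCopy_C4P (hbip : ∀ x y, A x y → σ x ≠ σ y) {x₁ x₂ y₁ y₂ : W}
    (h₁ : A x₁ y₁) (h₂ : A y₁ x₂) (h₃ : A x₂ y₂) (h₄ : A y₂ x₁) (h₅ : A y₁ x₁)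
    (n₁ : ¬ A x₁ y₂) (n₂ : ¬ A x₂ y₁) (n₃ : ¬ A y₂ x₂) :
    InducedCopy C4P A := by
  have hx : σ x₁ = σ x₂ := side_eq_of_arc_of_arc hbip h₁ h₂
  have hy : σ y₁ = σ y₂ := side_eq_of_arc_of_arc hbip h₂ h₃
  refine ⟨![x₁, x₂, y₁, y₂], ?_, ?_⟩
  · intro a b hab
    fin_cases a <;> fin_cases b <;> simp_all
  · intro a b
    fin_cases a <;> fin_cases b <;> simp [C4P, Prod.ext_iff] <;>
      first | assumption | exact not_arc_of_side_eq hbip (by simp_all)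

lemma inducedCopy_C4PP (hbip : ∀ x y, A x y → σ x ≠ σ y) {x₁ x₂ y₁ y₂ : W}
    (h₁ : A x₁ y₁) (h₂ : A y₁ x₂) (h₃ : A x₂ y₂) (h₄ : A y₂ x₁) (h₅ : A y₁ x₁)
    (h₆ : A x₂ y₁) (n₁ : ¬ A x₁ y₂) (n₂ : ¬ A y₂ x₂) :
    InducedCopy C4PP A := by
  have hx : σ x₁ = σ x₂ := side_eq_of_arc_of_arc hbip h₁ h₂
  have hy : σ y₁ = σ y₂ := side_eq_of_arc_of_arc hbip h₂ h₃
  refine ⟨![x₁, x₂, y₁, y₂], ?_, ?_⟩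
  · intro a b hab
    fin_cases a <;> fin_cases b <;> simp_all
  · intro a b
    fin_cases a <;> fin_cases b <;> simp [C4PP, Prod.ext_iff] <;>
      first | assumption | exact not_arc_of_side_eq hbip (by simp_all)

lemma containsHFORB_of_fourCycle (hbip : ∀ x y, A x y → σ x ≠ σ y) {a b c d : W}
    (hab : A a b) (hbc : A b c) (hcd : A c d) (hda : A d a) (hba : A b a) (hdc : ¬ A d c)
    (hdouble : ¬ A a d ∨ ¬ A c b) :
    ContainsHFORB σ A := by
  by_cases had : A a d
  · have hcb : ¬ A c b := hdouble.resolve_left (not_not.2 had)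
    exact Or.inr <| Or.inr <| Or.inl <| inducedCopy_C4PP hbip hda hab hbc hcd had hba hdc hcb
  by_cases hcb : A c b
  · exact Or.inr <| Or.inr <| Or.inl <| inducedCopy_C4PP hbip hab hbc hcd hda hba hcb had hdc
  · exact Or.inl <| inducedCopy_C4P hbip hab hbc hcd hda hba had hcb hdc

end FourCycle

lemma SemicompleteBipartite.arc_of_not_arc {W : Type*} {σ : W → Bool} {A : W → W → Prop}
    (hsb : SemicompleteBipartite σ A) {x y : W} (hxy : σ x ≠ σ y) (hyx : ¬ A y x) : A x y :=
  (hsb.2 x y hxy).resolve_right hyx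

section Layers

variable {W : Type*} {A : W → W → Prop} {s : ℕ} {Vc Uc : Fin s → Set W}

lemma exists_arc_of_mem_layer
    (hU : ∀ i : Fin s, Uc i = {y | ∃ v ∈ Vc i, A v y} \ ⋃ (r : Fin s) (_ : r < i), Uc r)
    {i : Fin s} {u : W} (hu : u ∈ Uc i) : ∃ w ∈ Vc i, A w u := by
  rw [hU i] at hu
  exact hu.1

lemma not_arc_to_later_layer
    (hU : ∀ i : Fin s, Uc i = {y | ∃ v ∈ Vc i, A v y} \ ⋃ (r : Fin s) (_ : r < i), Uc r)
    {j r : Fin s} (hjr : j < r) {u v : W} (hu : u ∈ Uc r) (hv : v ∈ Vc j) : ¬ A v u := by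
  intro hvu
  obtain ⟨q, hqj, huq⟩ : ∃ q ≤ j, u ∈ Uc q := by
    by_cases hearlier : u ∈ ⋃ (q : Fin s) (_ : q < j), Uc q
    · simp only [Set.mem_iUnion] at hearlier
      obtain ⟨q, hqj, huq⟩ := hearlier
      exact ⟨q, hqj.le, huq⟩
    · exact ⟨j, le_rfl, by rw [hU j]; exact ⟨⟨v, hv, hvu⟩, hearlier⟩⟩
  rw [hU r] at hu
  exact hu.2 (Set.mem_biUnion (hqj.trans_lt hjr) huq)

lemma arc_of_arc_of_le
    (hVsim : ∀ i, ∀ v ∈ Vc i, ∀ v' ∈ Vc i, {y | A v y} = {y | A v' y})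
    (hVmono : ∀ i i' : Fin s, i < i' → ∀ v ∈ Vc i, ∀ v' ∈ Vc i', {y | A v y} ⊂ {y | A v' y})
    {a b : Fin s} (hab : a ≤ b) {w v y : W} (hw : w ∈ Vc a) (hv : v ∈ Vc b) (hwy : A w y) :
    A v y := by
  rcases hab.lt_or_eq with hlt | rfl
  · exact (hVmono a b hlt w hw v hv).subset hwy
  · exact (hVsim a w hw v hv).subset hwy

end Layers

theorem stmt5_general {W : Type*} (σ : W → Bool) (A : W → W → Prop)
    (hsb : SemicompleteBipartite σ A)
    (hforb : ¬ ContainsHFORB σ A)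
    (s : ℕ) (Vc : Fin s → Set W)
    (hVside : ∀ i, Vc i ⊆ {x | σ x = false})
    (hVsim : ∀ i, ∀ v ∈ Vc i, ∀ v' ∈ Vc i, {y | A v y} = {y | A v' y})
    (hVmono : ∀ i i' : Fin s, i < i' → ∀ v ∈ Vc i, ∀ v' ∈ Vc i',
      {y | A v y} ⊂ {y | A v' y})
    (Uc : Fin s → Set W)
    (hU : ∀ i : Fin s,
      Uc i = {y | ∃ v ∈ Vc i, A v y} \ ⋃ (r : Fin s) (_ : r < i), Uc r) :
    ∀ i j : Fin s, i < j → ∀ u ∈ Uc i, ∀ v ∈ Vc j, A u v →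
      (∀ r : Fin s, i < r → ∀ u' ∈ Uc r, A u' v) ∧
      (∀ t : Fin s, t < j → ∀ v' ∈ Vc t, A u v') := by
  have side_ne {a b : Fin s} {x y z : W} (hx : x ∈ Vc a) (hy : y ∈ Vc b) (hxz : A x z) :
      σ z ≠ σ y := by
    rw [hVside b hy, ← hVside a hx]
    exact (hsb.1 x z hxz).symm
  intro i j hij u hu v hv huv
  obtain ⟨w, hw, hwu⟩ := exists_arc_of_mem_layer hU hu
  have hvu : A v u := arc_of_arc_of_le hVsim hVmono hij.le hw hv hwu
  constructor
  · intro r hir u' hu'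
    obtain ⟨x, hx, hxu'⟩ := exists_arc_of_mem_layer hU hu'
    rcases le_or_gt r j with hrj | hjr
    · by_contra hu'v
      have hwu' : ¬ A w u' := not_arc_to_later_layer hU hir hu' hw
      exact hforb <| containsHFORB_of_fourCycle hsb.1 huv
        (arc_of_arc_of_le hVsim hVmono hrj hx hv hxu')
        (hsb.arc_of_not_arc (side_ne hx hw hxu') hwu') hwu hvu hwu' (Or.inr hu'v)
    · exact hsb.arc_of_not_arc (side_ne hx hv hxu') (not_arc_to_later_layer hU hjr hu' hv)
  · intro t htj v' hv'
    rcases le_or_gt i t with hit | hti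
    · by_contra huv'
      obtain ⟨u₀, hvu₀, hv'u₀⟩ := Set.exists_of_ssubset (hVmono t j htj v' hv' v hv)
      exact hforb <| containsHFORB_of_fourCycle hsb.1 huv hvu₀
        (hsb.arc_of_not_arc (side_ne hv hv' hvu₀) hv'u₀)
        (arc_of_arc_of_le hVsim hVmono hit hw hv' hwu) hvu hv'u₀ (Or.inl huv')
    · exact hsb.arc_of_not_arc (side_ne hw hv' hwu) (not_arc_to_later_layer hU hti hu hv')

/-- Claim (1) inside Lemma 3.1: with `V₁, …, V_s` the similarity classes of the V-side,
indexed so that `N⁺(V₁) ⊊ … ⊊ N⁺(V_s)`, and `U_i = N⁺(V_i) \ (U_1 ∪ ⋯ ∪ U_{i-1})`: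
if `u ∈ U_i`, `v ∈ V_j`, `i < j` and `uv ∈ A`, then every `u' ∈ U_r` with `r > i`
dominates `v`, and `u` dominates every `v' ∈ V_t` with `t < j`. -/
theorem stmt5 {W : Type*} [Fintype W] (σ : W → Bool) (A : W → W → Prop)
    (hsb : SemicompleteBipartite σ A)
    (hforb : ¬ ContainsHFORB σ A)
    (hc4 : ¬ InducedCopy (dirCyc 4) A)
    (hnest : ∀ v v' : W, σ v = false → σ v' = false →
      {y | A v y} ⊆ {y | A v' y} ∨ {y | A v' y} ⊆ {y | A v y})
    (s : ℕ) (Vc : Fin s → Set W)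
    (hVside : ∀ i, Vc i ⊆ {x | σ x = false})
    (hVne : ∀ i, (Vc i).Nonempty)
    (hVcover : ∀ x, σ x = false → ∃ i, x ∈ Vc i)
    (hVsim : ∀ i, ∀ v ∈ Vc i, ∀ v' ∈ Vc i, {y | A v y} = {y | A v' y})
    (hVmono : ∀ i i' : Fin s, i < i' → ∀ v ∈ Vc i, ∀ v' ∈ Vc i',
      {y | A v y} ⊂ {y | A v' y})
    (Uc : Fin s → Set W)
    (hU : ∀ i : Fin s,
      Uc i = {y | ∃ v ∈ Vc i, A v y} \ ⋃ (r : Fin s) (_ : r < i), Uc r) :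
    ∀ i j : Fin s, i < j → ∀ u ∈ Uc i, ∀ v ∈ Vc j, A u v →
      (∀ r : Fin s, i < r → ∀ u' ∈ Uc r, A u' v) ∧
      (∀ t : Fin s, t < j → ∀ v' ∈ Vc t, A u v') :=
  stmt5_general σ A hsb hforb s Vc hVside hVsim hVmono Uc hU

end SBD
end

section
/- Let H = (V,U;A) be a strongly connected semicomplete bipartite digraph that contains no induced subdigraph belonging to the family HFORB and no induced directed 4-cycle. If UN(H^→) is connected and has diameter at least 4, then UN(H^←) is a complete bipartite graph, i.e., uv ∈ A(H) for every u ∈ U and v ∈ V. -/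
/-!
Suppose `vu` is a one-way arc with `v ∈ V`, `u ∈ U`. Excluding C4, C4' and C4'' means that no two
consecutive arcs of a directed 4-cycle are both one-way. Applied to the 4-cycles through `vu`, this
gives every non-isolated vertex `z ∈ V` of `UN(H^→)` an out-neighbour `s` with `vs` one-way.
Now let `x, y` be at distance at least 4 in `UN(H^→)`. If both lie in `V`, their one-way
neighbours `s, t`, together with an in-neighbour `f` of `v`, span N1 or N2 with `v, x, y`. If
`x ∈ V` and `y ∈ U`, then for any neighbour `t` of `y` the 4-cycle `v s t y v` has the two
consecutive one-way arcs `vs` and `st`. If both lie in `U`, this is the first case for the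
converse digraph, with `u` and `v` exchanged.
-/

namespace SBD

instance : DecidableRel C4P := fun _ _ => by unfold C4P; infer_instance
instance : DecidableRel C4PP := fun _ _ => by unfold C4PP; infer_instance
instance : DecidableRel N1 := fun _ _ => by unfold N1; infer_instance
instance : DecidableRel N2 := fun _ _ => by unfold N2; infer_instance

theorem _root_.Bool.eq_of_ne_of_ne {a b c : Bool} (ha : a ≠ c) (hb : b ≠ c) : a = b :=
  (Bool.eq_not_iff.2 ha).trans (Bool.eq_not_iff.2 hb).symm

section

variable {W : Type*} {σ : W → Bool} {A : W → W → Prop}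

theorem InducedCopy.of_iff {β : Type*} {F : β → β → Prop} (f : β → W)
    (hF : ∀ i j, (∀ k, (F i k ↔ F j k) ∧ (F k i ↔ F k j)) → i = j)
    (hf : ∀ a b, F a b ↔ A (f a) (f b)) : InducedCopy F A :=
  ⟨f, fun i j hij => hF i j fun k => by simp only [hf, hij, and_self], hf⟩

theorem InducedCopy.flip {β : Type*} {F : β → β → Prop} (h : InducedCopy F (flip A)) :
    InducedCopy (flip F) A :=
  let ⟨f, hf, hF⟩ := h
  ⟨f, hf, fun a b => hF b a⟩

theorem SemicompleteBipartite.eq_true_of_arc (hsb : SemicompleteBipartite σ A) {a b : W}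
    (hab : A a b) (ha : σ a = false) : σ b = true := by
  simpa [ha] using (hsb.1 a b hab).symm

theorem SemicompleteBipartite.eq_false_of_arc (hsb : SemicompleteBipartite σ A) {a b : W}
    (hab : A a b) (hb : σ b = true) : σ a = false :=
  Bool.eq_false_iff.2 (hb ▸ hsb.1 a b hab)

theorem SemicompleteBipartite.twoCycle_of_fourCycle (hsb : SemicompleteBipartite σ A)
    (hC4 : ¬ InducedCopy (dirCyc 4) A) (hC4P : ¬ InducedCopy C4P A)
    (hC4PP : ¬ InducedCopy C4PP A) {a b c d : W}
    (hab : A a b) (hbc : A b c) (hcd : A c d) (hda : A d a) : A b a ∨ A c b := by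
  by_contra! ⟨hba, hcb⟩
  have hsame : ∀ p q, σ p = σ q → ¬ A p q := fun p q hpq h => hsb.1 p q h hpq
  have hc : σ c = σ a := Bool.eq_of_ne_of_ne (hsb.1 b c hbc).symm (hsb.1 a b hab)
  have hd : σ d = σ b := Bool.eq_of_ne_of_ne (hsb.1 c d hcd).symm (hsb.1 b c hbc)
  by_cases hdc : A d c <;> by_cases had : A a d
  · refine hC4PP (InducedCopy.of_iff ![c, a, d, b] (by decide) fun i j => ?_)
    fin_cases i <;> fin_cases j <;> simp [C4PP] <;>
      first | assumption | exact hsame _ _ (by simp only [hc, hd])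
  · refine hC4P (InducedCopy.of_iff ![c, a, d, b] (by decide) fun i j => ?_)
    fin_cases i <;> fin_cases j <;> simp [C4P] <;>
      first | assumption | exact hsame _ _ (by simp only [hc, hd])
  · refine hC4P (InducedCopy.of_iff ![d, b, a, c] (by decide) fun i j => ?_)
    fin_cases i <;> fin_cases j <;> simp [C4P] <;>
      first | assumption | exact hsame _ _ (by simp only [hc, hd])
  · refine hC4 (InducedCopy.of_iff (F := fun i j : Fin 4 => j = i + 1) ![a, b, c, d]
      (by decide) fun i j => ?_)
    fin_cases i <;> fin_cases j <;> simp <;>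
      first | assumption | exact hsame _ _ (by simp only [hc, hd])

theorem unFwd.symm {p q : W} (h : unFwd σ A p q) : unFwd σ A q p :=
  Or.symm h

theorem unFwd.arc_of_false {p q : W} (h : unFwd σ A p q) (hp : σ p = false) : A p q := by
  rcases h with ⟨hpq, -⟩ | ⟨-, -, hp'⟩
  exacts [hpq, absurd (hp.symm.trans hp') Bool.false_ne_true]

theorem unFwd.arc_of_true {p q : W} (h : unFwd σ A p q) (hp : σ p = true) : A q p := by
  rcases h with ⟨-, hp', -⟩ | ⟨hqp, -⟩
  exacts [absurd (hp'.symm.trans hp) Bool.false_ne_true, hqp]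

theorem unFwd_of_arc (hsb : SemicompleteBipartite σ A) {a b : W} (hab : A a b)
    (ha : σ a = false) : unFwd σ A a b :=
  Or.inl ⟨hab, ha, hsb.eq_true_of_arc hab ha⟩

theorem exists_unFwd_path2_of_false (hsb : SemicompleteBipartite σ A) {x y : W}
    (hx : σ x = false) (hy : σ y = false) (h : ∃ a, A x a ∧ A y a) :
    ∃ a, unFwd σ A x a ∧ unFwd σ A a y :=
  let ⟨a, hxa, hya⟩ := h
  ⟨a, unFwd_of_arc hsb hxa hx, (unFwd_of_arc hsb hya hy).symm⟩

theorem exists_unFwd_path2_of_true (hsb : SemicompleteBipartite σ A) {x y : W}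
    (hx : σ x = true) (hy : σ y = true) (h : ∃ a, A a x ∧ A a y) :
    ∃ a, unFwd σ A x a ∧ unFwd σ A a y :=
  let ⟨a, hax, hay⟩ := h
  ⟨a, (unFwd_of_arc hsb hax (hsb.eq_false_of_arc hax hx)).symm,
    unFwd_of_arc hsb hay (hsb.eq_false_of_arc hay hy)⟩

theorem exists_unFwd_path3 (hsb : SemicompleteBipartite σ A) {x y : W}
    (hx : σ x = false) (hy : σ y = true) (h : ∃ a b, A x a ∧ A b a ∧ A b y) :
    ∃ a b, unFwd σ A x a ∧ unFwd σ A a b ∧ unFwd σ A b y :=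
  let ⟨a, b, hxa, hba, hby⟩ := h
  have hb := hsb.eq_false_of_arc hby hy
  ⟨a, b, unFwd_of_arc hsb hxa hx, (unFwd_of_arc hsb hba hb).symm, unFwd_of_arc hsb hby hb⟩

/-- What the argument uses of the hypotheses of the theorem: semicompleteness, the consequence
`twoCycle_of_fourCycle` of excluding C4, C4' and C4'', and the exclusion of N1, N2 and their
converses. Unlike the hypotheses themselves, this is visibly invariant under reversing all arcs
(`Tame.flip`). -/
structure Tame (σ : W → Bool) (A : W → W → Prop) : Prop where
  semicomplete : SemicompleteBipartite σ A
  twoCycle_of_fourCycle {a b c d : W} : A a b → A b c → A c d → A d a → A b a ∨ A c b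
  not_N1 : ¬ InducedCopy N1 A
  not_N2 : ¬ InducedCopy N2 A
  not_N1_flip : ¬ InducedCopy N1 (flip A)
  not_N2_flip : ¬ InducedCopy N2 (flip A)

namespace Tame

theorem of_not_containsHFORB (hsb : SemicompleteBipartite σ A) (hforb : ¬ ContainsHFORB σ A)
    (hC4 : ¬ InducedCopy (dirCyc 4) A) : Tame σ A where
  semicomplete := hsb
  twoCycle_of_fourCycle := hsb.twoCycle_of_fourCycle hC4
    (fun h => hforb (by unfold ContainsHFORB; tauto))
    (fun h => hforb (by unfold ContainsHFORB; tauto))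
  not_N1 h := hforb (by unfold ContainsHFORB; tauto)
  not_N2 h := hforb (by unfold ContainsHFORB; tauto)
  not_N1_flip h := hforb (by have := h.flip; unfold ContainsHFORB; tauto)
  not_N2_flip h := hforb (by have := h.flip; unfold ContainsHFORB; tauto)

variable {a b c : W}

theorem flip (h : Tame σ A) : Tame σ (flip A) where
  semicomplete := ⟨fun a b hab => (h.semicomplete.1 b a hab).symm,
    fun a b hab => h.semicomplete.2 b a (Ne.symm hab)⟩
  twoCycle_of_fourCycle hab hbc hcd hda := (h.twoCycle_of_fourCycle hbc hab hda hcd).symm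
  not_N1 := h.not_N1_flip
  not_N2 := h.not_N2_flip
  not_N1_flip := h.not_N1
  not_N2_flip := h.not_N2

theorem side_ne (h : Tame σ A) (hab : A a b) : σ a ≠ σ b :=
  h.semicomplete.1 a b hab

theorem not_arc_of_side_eq (h : Tame σ A) (hab : σ a = σ b) : ¬ A a b :=
  fun h' => h.side_ne h' hab

theorem arc_of_not_arc (h : Tame σ A) (hab : σ a ≠ σ b) (hn : ¬ A a b) : A b a :=
  (h.semicomplete.2 a b hab).resolve_left hn

theorem side_eq_of_arcs_to (h : Tame σ A) (hac : A a c) (hbc : A b c) : σ a = σ b :=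
  Bool.eq_of_ne_of_ne (h.side_ne hac) (h.side_ne hbc)

theorem side_eq_of_arcs_from (h : Tame σ A) (hca : A c a) (hcb : A c b) : σ a = σ b :=
  Bool.eq_of_ne_of_ne (h.side_ne hca).symm (h.side_ne hcb).symm

theorem false_of_N (h : Tame σ A) {x₁ x₂ x₃ y₁ y₂ y₃ : W}
    (h11 : A x₁ y₁) (h22 : A x₂ y₂) (h22' : A y₂ x₂) (h33 : A x₃ y₃) (h33' : A y₃ x₃)
    (h12 : A x₁ y₂) (h12' : ¬ A y₂ x₁) (h13 : A x₁ y₃) (h13' : ¬ A y₃ x₁)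
    (h32 : A x₃ y₂) (h32' : ¬ A y₂ x₃) (h23 : A x₂ y₃) (h23' : ¬ A y₃ x₂)
    (h21 : A y₁ x₂) (h21' : ¬ A x₂ y₁) (h31 : A y₁ x₃) (h31' : ¬ A x₃ y₁) : False := by
  have e₂ : σ x₂ = σ x₁ := h.side_eq_of_arcs_to h22 h12
  have e₃ : σ x₃ = σ x₁ := h.side_eq_of_arcs_to h33 h13
  have f₂ : σ y₂ = σ y₁ := h.side_eq_of_arcs_from h12 h11
  have f₃ : σ y₃ = σ y₁ := h.side_eq_of_arcs_from h13 h11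
  by_cases h11' : A y₁ x₁
  · refine h.not_N1 (InducedCopy.of_iff ![x₁, x₂, x₃, y₁, y₂, y₃] (by decide) fun i j => ?_)
    fin_cases i <;> fin_cases j <;> simp [N1] <;>
      first | assumption | exact h.not_arc_of_side_eq (by simp only [e₂, e₃, f₂, f₃])
  · refine h.not_N2 (InducedCopy.of_iff ![x₁, x₂, x₃, y₁, y₂, y₃] (by decide) fun i j => ?_)
    fin_cases i <;> fin_cases j <;> simp [N2] <;>
      first | assumption | exact h.not_arc_of_side_eq (by simp only [e₂, e₃, f₂, f₃])

theorem exists_oneWay_of_arc (h : Tame σ A) {u v z n : W} (hvu : A v u) (huv : ¬ A u v)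
    (hz : σ z = σ v) (hzn : A z n) : ∃ s, A z s ∧ A v s ∧ ¬ A s v := by
  by_cases hzu : A z u
  · exact ⟨u, hzu, hvu, huv⟩
  have huz : A u z := h.arc_of_not_arc (hz ▸ h.side_ne hvu) hzu
  have hnv : ¬ A n v := fun hnv => (h.twoCycle_of_fourCycle hvu huz hzn hnv).elim huv hzu
  exact ⟨n, hzn, h.arc_of_not_arc (hz ▸ h.side_ne hzn).symm hnv, hnv⟩

theorem false_of_no_common_outNeighbor (h : Tame σ A) {u v f x y n m : W} (hvu : A v u)
    (huv : ¬ A u v) (hfv : A f v) (hx : σ x = σ v) (hy : σ y = σ v) (hxn : A x n)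
    (hym : A y m) (hxy : ¬ ∃ a, A x a ∧ A y a) : False := by
  obtain ⟨s, hxs, hvs, hsv⟩ := h.exists_oneWay_of_arc hvu huv hx hxn
  obtain ⟨t, hyt, hvt, htv⟩ := h.exists_oneWay_of_arc hvu huv hy hym
  have hys : ¬ A y s := fun hys => hxy ⟨s, hxs, hys⟩
  have hxt : ¬ A x t := fun hxt => hxy ⟨t, hxt, hyt⟩
  have hsy : A s y := h.arc_of_not_arc (hy ▸ h.side_ne hvs) hys
  have htx : A t x := h.arc_of_not_arc (hx ▸ h.side_ne hvt) hxt
  have hsx : A s x := (h.twoCycle_of_fourCycle hxs hsy hyt htx).resolve_right hys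
  have hty : A t y := (h.twoCycle_of_fourCycle hyt htx hxs hsy).resolve_right hxt
  have hxf : ¬ A x f := fun hxf => (h.twoCycle_of_fourCycle hvt htx hxf hfv).elim htv hxt
  have hyf : ¬ A y f := fun hyf => (h.twoCycle_of_fourCycle hvs hsy hyf hfv).elim hsv hys
  have hfx : A f x := h.arc_of_not_arc (hx ▸ h.side_ne hfv).symm hxf
  have hfy : A f y := h.arc_of_not_arc (hy ▸ h.side_ne hfv).symm hyf
  -- `(x₁, x₂, x₃, y₁, y₂, y₃) := (f, s, t, v, x, y)`
  exact h.false_of_N hfv hsx hxs hty hyt hfx hxf hfy hyf htx hxt hsy hys hvs hsv hvt htv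

theorem false_of_no_path3 (h : Tame σ A) {u v x y n t : W} (hvu : A v u) (huv : ¬ A u v)
    (hx : σ x = σ v) (hy : σ y = σ u) (hxn : A x n) (hty : A t y)
    (hxy : ¬ ∃ a b, A x a ∧ A b a ∧ A b y) : False := by
  obtain ⟨s, hxs, hvs, hsv⟩ := h.exists_oneWay_of_arc hvu huv hx hxn
  have hts : ¬ A t s := fun hts => hxy ⟨s, t, hxs, hts, hty⟩
  have hvy : ¬ A v y := fun hvy => hxy ⟨s, v, hxs, hvs, hvy⟩
  have hst : A s t := h.arc_of_not_arc
    (by rw [h.side_eq_of_arcs_from hvs hvu, ← hy]; exact h.side_ne hty) hts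
  have hyv : A y v := h.arc_of_not_arc (hy ▸ h.side_ne hvu) hvy
  exact (h.twoCycle_of_fourCycle hvs hst hty hyv).elim hsv hts

end Tame

end

theorem stmt8_general {W : Type*} (σ : W → Bool) (A : W → W → Prop)
    (hsb : SemicompleteBipartite σ A)
    (hstrong : ∀ x y : W, Relation.ReflTransGen A x y)
    (hforb : ¬ ContainsHFORB σ A)
    (hc4 : ¬ InducedCopy (dirCyc 4) A)
    (hconn : ∀ x y : W, Relation.ReflTransGen (unFwd σ A) x y)
    (hdiam : ∃ x y : W, ¬ x = y ∧ ¬ unFwd σ A x y ∧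
      ¬ (∃ a, unFwd σ A x a ∧ unFwd σ A a y) ∧
      ¬ (∃ a b, unFwd σ A x a ∧ unFwd σ A a b ∧ unFwd σ A b y)) :
    ∀ u v : W, σ u = true → σ v = false → A u v := by
  intro u v hu hv
  by_contra huv
  have h := Tame.of_not_containsHFORB hsb hforb hc4
  have hvu : A v u := h.arc_of_not_arc (by rw [hu, hv]; decide) huv
  have hne : u ≠ v := fun e => Bool.false_ne_true (hv.symm.trans (e ▸ hu))
  obtain ⟨f, -, hfv⟩ := (hstrong u v).cases_tail.resolve_left hne.symm
  obtain ⟨r, hur, -⟩ := (hstrong u v).cases_head.resolve_left hne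
  obtain ⟨x, y, hxy, -, hd2, hd3⟩ := hdiam
  obtain ⟨n, hxn, -⟩ := (hconn x y).cases_head.resolve_left hxy
  obtain ⟨m, hym, -⟩ := (hconn y x).cases_head.resolve_left (Ne.symm hxy)
  cases hx : σ x <;> cases hy : σ y
  · exact h.false_of_no_common_outNeighbor hvu huv hfv (hx.trans hv.symm) (hy.trans hv.symm)
      (hxn.arc_of_false hx) (hym.arc_of_false hy) (hd2 ∘ exists_unFwd_path2_of_false hsb hx hy)
  · exact h.false_of_no_path3 hvu huv (hx.trans hv.symm) (hy.trans hu.symm)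
      (hxn.arc_of_false hx) (hym.arc_of_true hy) (hd3 ∘ exists_unFwd_path3 hsb hx hy)
  · refine h.false_of_no_path3 hvu huv (hy.trans hv.symm) (hx.trans hu.symm)
      (hym.arc_of_false hy) (hxn.arc_of_true hx) fun hp => hd3 ?_
    obtain ⟨a, b, hya, hab, hbx⟩ := exists_unFwd_path3 hsb hy hx hp
    exact ⟨b, a, hbx.symm, hab.symm, hya.symm⟩
  · exact h.flip.false_of_no_common_outNeighbor hvu huv hur (hx.trans hu.symm)
      (hy.trans hu.symm) (hxn.arc_of_true hx) (hym.arc_of_true hy)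
      (hd2 ∘ exists_unFwd_path2_of_true hsb hx hy)

/-- Cases 1 and 2 of the proof of Theorem 3.2: if `UN(H^→)` is connected with diameter
at least 4 (there are two vertices joined by no path of length ≤ 3), then `UN(H^←)` is a
complete bipartite graph, i.e. `uv ∈ A` for every `u ∈ U` and `v ∈ V`. -/
theorem stmt8 {W : Type*} [Fintype W] (σ : W → Bool) (A : W → W → Prop)
    (hsb : SemicompleteBipartite σ A)
    (hstrong : ∀ x y : W, Relation.ReflTransGen A x y)
    (hforb : ¬ ContainsHFORB σ A)
    (hc4 : ¬ InducedCopy (dirCyc 4) A)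
    (hconn : ∀ x y : W, Relation.ReflTransGen (unFwd σ A) x y)
    (hdiam : ∃ x y : W, ¬ x = y ∧ ¬ unFwd σ A x y ∧
      ¬ (∃ a, unFwd σ A x a ∧ unFwd σ A a y) ∧
      ¬ (∃ a b, unFwd σ A x a ∧ unFwd σ A a b ∧ unFwd σ A b y)) :
    ∀ u v : W, σ u = true → σ v = false → A u v :=
  stmt8_general σ A hsb hstrong hforb hc4 hconn hdiam

end SBD
end

section
/- Let H be a semicomplete bipartite digraph that contains no induced subdigraph belonging to the family HFORB but does contain the directed 4-cycle as an induced subdigraph. Then H is an extension of the directed 4-cycle; that is, V(H) can be partitioned into four nonempty sets W_1, W_2, W_3, W_4 such that the arc set of H is exactly (W_1×W_2) ∪ (W_2×W_3) ∪ (W_3×W_4) ∪ (W_4×W_1). -/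
namespace SBD

/-!
Fix an induced directed 4-cycle `c 0 → c 1 → c 2 → c 3 → c 0`. Forbidding `C4'` and `C4''`
rules out 2-cycles through a vertex of the cycle. Then forbidding `H*` and its converse forces
every vertex `x` on the side of `c i` to satisfy `c (i - 1) → x → c (i + 1)` or
`c (i + 1) → x → c (i - 1)`, i.e. to be in the class of `c i` or of `c (i + 2)`. Forbidding
`C4'` and `H*` once more, every vertex of class `i` dominates every vertex of class `i + 1` and not
conversely, while vertices whose classes differ by `0` or `2` lie on the same side. Hence the
classes are the sets `W_i` of the extension.
-/

theorem injective_of_forall_iff {β : Type*} {F : β → β → Prop}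
    (hF : ∀ a b, (∀ d, F a d ↔ F b d) → a = b) : Function.Injective F :=
  fun a b h => hF a b fun d => Iff.of_eq (congrFun h d)

theorem C4P_injective : Function.Injective C4P :=
  injective_of_forall_iff (by unfold C4P; decide)

theorem C4PP_injective : Function.Injective C4PP :=
  injective_of_forall_iff (by unfold C4PP; decide)

theorem Hstar_injective : Function.Injective Hstar :=
  injective_of_forall_iff (by unfold Hstar; decide)

theorem flip_Hstar_injective : Function.Injective (flip Hstar) :=
  injective_of_forall_iff (by unfold flip Hstar; decide)

section
variable {W : Type*} {σ : W → Bool} {A : W → W → Prop}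

/-- When distinct vertices of the pattern have distinct out-neighbourhoods, injectivity of `f`
comes for free. -/
theorem InducedCopy.of_forall_iff {β : Type*} {F : β → β → Prop} (hF : Function.Injective F)
    (f : β → W) (hf : ∀ a b, F a b ↔ A (f a) (f b)) : InducedCopy F A := by
  refine ⟨f, fun a b hab => hF (funext fun d => propext ?_), hf⟩
  rw [hf, hf, hab]

theorem SemicompleteBipartite.not_arc_of_side_eq (hsb : SemicompleteBipartite σ A) {u v : W}
    (h : σ u = σ v) : ¬ A u v :=
  fun huv => hsb.1 u v huv h

theorem SemicompleteBipartite.side_eq_not_of_arc (hsb : SemicompleteBipartite σ A) {u v : W}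
    (h : A u v) : σ v = !σ u :=
  Bool.eq_not.2 (hsb.1 u v h).symm

/-- Reducible, so that a hypothesis `hc : IsInducedDirCycle A c` can be given to `simp`. -/
abbrev IsInducedDirCycle {n : ℕ} (A : W → W → Prop) (c : ZMod n → W) : Prop :=
  ∀ a b, A (c a) (c b) ↔ b = a + 1

def InCycleClass {n : ℕ} (A : W → W → Prop) (c : ZMod n → W) (i : ZMod n) (x : W) : Prop :=
  A (c (i - 1)) x ∧ A x (c (i + 1))

section cycle
variable {n : ℕ} {c : ZMod n → W}

theorem IsInducedDirCycle.rotate (hc : IsInducedDirCycle A c) (r : ZMod n) :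
    IsInducedDirCycle A (fun j => c (r + j)) := by
  intro a b
  rw [hc, add_assoc, add_right_inj]

theorem inCycleClass_rotate_iff {r i : ZMod n} {x : W} :
    InCycleClass A (fun j => c (r + j)) i x ↔ InCycleClass A c (r + i) x := by
  simp only [InCycleClass, add_sub_assoc, add_assoc]

theorem IsInducedDirCycle.side_add_two (hsb : SemicompleteBipartite σ A)
    (hc : IsInducedDirCycle A c) (i : ZMod n) : σ (c (i + 2)) = σ (c i) := by
  rw [← one_add_one_eq_two, ← add_assoc, hsb.side_eq_not_of_arc ((hc _ _).2 rfl),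
    hsb.side_eq_not_of_arc ((hc _ _).2 rfl), Bool.not_not]

theorem InCycleClass.side_eq (hsb : SemicompleteBipartite σ A) (hc : IsInducedDirCycle A c)
    {i : ZMod n} {x : W} (hx : InCycleClass A c i x) : σ x = σ (c i) := by
  have hci : A (c (i - 1)) (c i) := (hc _ _).2 (sub_add_cancel i 1).symm
  rw [hsb.side_eq_not_of_arc hx.1, hsb.side_eq_not_of_arc hci]

end cycle

variable {c : ZMod 4 → W}

theorem IsInducedDirCycle.sides (hsb : SemicompleteBipartite σ A) (hc : IsInducedDirCycle A c) :
    σ (c 1) = !σ (c 0) ∧ σ (c 2) = σ (c 0) ∧ σ (c 3) = !σ (c 0) := by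
  have h : ∀ i : ZMod 4, σ (c (i + 1)) = !σ (c i) :=
    fun i => hsb.side_eq_not_of_arc ((hc i (i + 1)).2 rfl)
  have h1 : σ (c 1) = !σ (c 0) := h 0
  have h2 : σ (c 2) = σ (c 0) := (h 1).trans (by rw [h1, Bool.not_not])
  exact ⟨h1, h2, (h 2).trans (congrArg (!·) h2)⟩

theorem not_arc_of_arc_cycle_zero (hsb : SemicompleteBipartite σ A)
    (hC4P : ¬ InducedCopy C4P A) (hC4PP : ¬ InducedCopy C4PP A) (hc : IsInducedDirCycle A c)
    {x : W} (hx0 : A x (c 0)) : ¬ A (c 0) x := by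
  intro h0x
  obtain ⟨s1, s2, s3⟩ := hc.sides hsb
  have hx : σ x = !σ (c 0) := hsb.side_eq_not_of_arc h0x
  by_cases hx2 : A x (c 2)
  · by_cases h2x : A (c 2) x
    · refine hC4PP (.of_forall_iff C4PP_injective ![c 0, c 2, x, c 3] fun a b => ?_)
      fin_cases a <;> fin_cases b <;> simp +decide [C4PP, hsb.not_arc_of_side_eq, *]
    · refine hC4P (.of_forall_iff C4P_injective ![c 0, c 2, x, c 3] fun a b => ?_)
      fin_cases a <;> fin_cases b <;> simp +decide [C4P, hsb.not_arc_of_side_eq, *]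
  · have h2x : A (c 2) x := (hsb.2 x (c 2) (by simp [hx, s2])).resolve_left hx2
    refine hC4P (.of_forall_iff C4P_injective ![x, c 1, c 0, c 2] fun a b => ?_)
    fin_cases a <;> fin_cases b <;> simp +decide [C4P, hsb.not_arc_of_side_eq, *]

theorem not_arc_of_arc_cycle (hsb : SemicompleteBipartite σ A)
    (hC4P : ¬ InducedCopy C4P A) (hC4PP : ¬ InducedCopy C4PP A) (hc : IsInducedDirCycle A c)
    {x : W} {i : ZMod 4} (hxi : A x (c i)) : ¬ A (c i) x := by
  simpa using not_arc_of_arc_cycle_zero hsb hC4P hC4PP (hc.rotate i) (x := x) (by simpa using hxi)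

theorem inCycleClass_zero_or_two_of_side_eq (hsb : SemicompleteBipartite σ A)
    (hC4P : ¬ InducedCopy C4P A) (hC4PP : ¬ InducedCopy C4PP A)
    (hHstar : ¬ InducedCopy Hstar A) (hHstar' : ¬ InducedCopy (flip Hstar) A)
    (hc : IsInducedDirCycle A c) {x : W} (hx : σ x = σ (c 0)) :
    InCycleClass A c 0 x ∨ InCycleClass A c 2 x := by
  obtain ⟨s1, s2, s3⟩ := hc.sides hsb
  have no2 := fun i => not_arc_of_arc_cycle (x := x) hsb hC4P hC4PP hc (i := i)
  show (A (c 3) x ∧ A x (c 1)) ∨ (A (c 1) x ∧ A x (c 3))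
  rcases hsb.2 x (c 1) (by simp [hx, s1]) with hx1 | h1x <;>
    rcases hsb.2 x (c 3) (by simp [hx, s3]) with hx3 | h3x
  · have h1x := no2 1 hx1
    have h3x := no2 3 hx3
    refine absurd (.of_forall_iff flip_Hstar_injective ![c 1, c 3, c 0, c 2, x]
      fun a b => ?_) hHstar'
    fin_cases a <;> fin_cases b <;> simp +decide [Hstar, flip, hsb.not_arc_of_side_eq, *]
  · exact .inl ⟨h3x, hx1⟩
  · exact .inr ⟨h1x, hx3⟩
  · have hx1 : ¬ A x (c 1) := fun h => no2 1 h h1x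
    have hx3 : ¬ A x (c 3) := fun h => no2 3 h h3x
    refine absurd (.of_forall_iff Hstar_injective ![c 1, c 3, c 2, c 0, x] fun a b => ?_) hHstar
    fin_cases a <;> fin_cases b <;> simp +decide [Hstar, hsb.not_arc_of_side_eq, *]

theorem inCycleClass_or_of_side_eq (hsb : SemicompleteBipartite σ A)
    (hC4P : ¬ InducedCopy C4P A) (hC4PP : ¬ InducedCopy C4PP A)
    (hHstar : ¬ InducedCopy Hstar A) (hHstar' : ¬ InducedCopy (flip Hstar) A)
    (hc : IsInducedDirCycle A c) {x : W} {r : ZMod 4} (hx : σ x = σ (c r)) :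
    InCycleClass A c r x ∨ InCycleClass A c (r + 2) x := by
  simpa [inCycleClass_rotate_iff] using
    inCycleClass_zero_or_two_of_side_eq hsb hC4P hC4PP hHstar hHstar' (hc.rotate r)
      (by simpa using hx)

theorem exists_inCycleClass (hsb : SemicompleteBipartite σ A)
    (hC4P : ¬ InducedCopy C4P A) (hC4PP : ¬ InducedCopy C4PP A)
    (hHstar : ¬ InducedCopy Hstar A) (hHstar' : ¬ InducedCopy (flip Hstar) A)
    (hc : IsInducedDirCycle A c) (x : W) : ∃ i, InCycleClass A c i x := by
  have hside : σ x = σ (c 0) ∨ σ x = σ (c 1) := by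
    rw [(hc.sides hsb).1]; cases σ x <;> cases σ (c 0) <;> simp
  rcases hside with hx | hx <;>
    rcases inCycleClass_or_of_side_eq hsb hC4P hC4PP hHstar hHstar' hc hx with h | h <;>
    exact ⟨_, h⟩

theorem InCycleClass.arc_zero_one (hsb : SemicompleteBipartite σ A)
    (hC4P : ¬ InducedCopy C4P A) (hC4PP : ¬ InducedCopy C4PP A) (hHstar : ¬ InducedCopy Hstar A)
    (hc : IsInducedDirCycle A c) {x y : W} (hx : InCycleClass A c 0 x)
    (hy : InCycleClass A c 1 y) : A x y ∧ ¬ A y x := by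
  obtain ⟨s1, s2, s3⟩ := hc.sides hsb
  obtain ⟨h3x, hx1⟩ : A (c 3) x ∧ A x (c 1) := hx
  obtain ⟨h0y, hy2⟩ : A (c 0) y ∧ A y (c 2) := hy
  have hxs : σ x = σ (c 0) := by rw [hsb.side_eq_not_of_arc h3x, s3, Bool.not_not]
  have hys : σ y = σ (c 1) := by rw [hsb.side_eq_not_of_arc h0y]; exact s1.symm
  have hx3 : ¬ A x (c 3) := fun h => not_arc_of_arc_cycle hsb hC4P hC4PP hc h h3x
  have h2y : ¬ A (c 2) y := not_arc_of_arc_cycle hsb hC4P hC4PP hc hy2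
  have hy0 : ¬ A y (c 0) := fun h => not_arc_of_arc_cycle hsb hC4P hC4PP hc h h0y
  have hyx : ¬ A y x := by
    intro hyx
    by_cases hxy : A x y
    · refine hC4P (.of_forall_iff C4P_injective ![x, c 2, y, c 3] fun a b => ?_)
      fin_cases a <;> fin_cases b <;> simp +decide [C4P, hsb.not_arc_of_side_eq, *]
    · refine hHstar (.of_forall_iff Hstar_injective ![y, c 3, c 2, c 0, x] fun a b => ?_)
      fin_cases a <;> fin_cases b <;> simp +decide [Hstar, hsb.not_arc_of_side_eq, *]
  exact ⟨(hsb.2 x y (by simp [hxs, hys, s1])).resolve_right hyx, hyx⟩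

theorem InCycleClass.arc_of_succ (hsb : SemicompleteBipartite σ A)
    (hC4P : ¬ InducedCopy C4P A) (hC4PP : ¬ InducedCopy C4PP A) (hHstar : ¬ InducedCopy Hstar A)
    (hc : IsInducedDirCycle A c) {i : ZMod 4} {x y : W} (hx : InCycleClass A c i x)
    (hy : InCycleClass A c (i + 1) y) : A x y ∧ ¬ A y x :=
  InCycleClass.arc_zero_one hsb hC4P hC4PP hHstar (hc.rotate i)
    (inCycleClass_rotate_iff.2 (by simpa using hx)) (inCycleClass_rotate_iff.2 hy)

theorem InCycleClass.arc_iff (hsb : SemicompleteBipartite σ A)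
    (hC4P : ¬ InducedCopy C4P A) (hC4PP : ¬ InducedCopy C4PP A) (hHstar : ¬ InducedCopy Hstar A)
    (hc : IsInducedDirCycle A c) {i j : ZMod 4} {x y : W} (hx : InCycleClass A c i x)
    (hy : InCycleClass A c j y) : A x y ↔ j = i + 1 := by
  refine ⟨fun hxy => ?_, fun hj => (hx.arc_of_succ hsb hC4P hC4PP hHstar hc (hj ▸ hy)).1⟩
  obtain ⟨d, rfl⟩ : ∃ d, j = i + d := ⟨j - i, (add_sub_cancel i j).symm⟩
  have hxs := hx.side_eq hsb hc
  have hys := hy.side_eq hsb hc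
  obtain rfl | rfl | rfl | rfl :=
    (by decide : ∀ d : ZMod 4, d = 0 ∨ d = 1 ∨ d = 2 ∨ d = 3) d
  · exact absurd hxy (hsb.not_arc_of_side_eq (by simpa [hxs] using hys.symm))
  · rfl
  · exact absurd hxy (hsb.not_arc_of_side_eq (by simpa [hxs, hc.side_add_two hsb] using hys.symm))
  · have hx' : InCycleClass A c (i + 3 + 1) x := by
      rwa [add_assoc, show (3 + 1 : ZMod 4) = 0 from rfl, add_zero]
    exact absurd hxy (hy.arc_of_succ hsb hC4P hC4PP hHstar hc hx').2

end

theorem ZMod.apply_eq_apply_zero_add {n : ℕ} [NeZero n] {f : ZMod n → ZMod n}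
    (hf : ∀ i, f (i + 1) = f i + 1) (j : ZMod n) : f j = f 0 + j := by
  obtain ⟨k, rfl⟩ := ZMod.natCast_zmod_surjective j
  induction k with
  | zero => simp
  | succ k ih => rw [Nat.cast_succ, hf, ih, add_assoc]

theorem stmt10_general {W : Type*} (σ : W → Bool) (A : W → W → Prop)
    (hsb : SemicompleteBipartite σ A)
    (hforb : ¬ ContainsHFORB σ A)
    (hc4 : InducedCopy (dirCyc 4) A) :
    ∃ g : W → ZMod 4, Function.Surjective g ∧ ∀ x y : W, A x y ↔ g y = g x + 1 := by
  have hC4P : ¬ InducedCopy C4P A := fun h => hforb (by simp [ContainsHFORB, h])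
  have hC4PP : ¬ InducedCopy C4PP A := fun h => hforb (by simp [ContainsHFORB, h])
  have hHstar : ¬ InducedCopy Hstar A := fun h => hforb (by simp [ContainsHFORB, h])
  have hHstar' : ¬ InducedCopy (flip Hstar) A := fun h => hforb (by simp [ContainsHFORB, h])
  obtain ⟨c, -, hc⟩ := hc4
  have hc : IsInducedDirCycle A c := fun a b => (hc a b).symm
  choose g hg using exists_inCycleClass hsb hC4P hC4PP hHstar hHstar' hc
  have harc : ∀ x y, A x y ↔ g y = g x + 1 :=
    fun x y => (hg x).arc_iff hsb hC4P hC4PP hHstar hc (hg y)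
  have hgc : ∀ i, g (c i) = g (c 0) + i :=
    ZMod.apply_eq_apply_zero_add fun i => (harc _ _).1 ((hc i (i + 1)).2 rfl)
  exact ⟨g, fun i => ⟨c (i - g (c 0)), by rw [hgc, add_sub_cancel]⟩, harc⟩

/-- Theorem 3.4: a semicomplete bipartite digraph with no induced subdigraph from HFORB
that contains an induced directed 4-cycle is an extension of the directed 4-cycle. -/
theorem stmt10 {W : Type*} [Fintype W] (σ : W → Bool) (A : W → W → Prop)
    (hsb : SemicompleteBipartite σ A)
    (hforb : ¬ ContainsHFORB σ A)
    (hc4 : InducedCopy (dirCyc 4) A) :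
    ∃ g : W → ZMod 4, Function.Surjective g ∧ ∀ x y : W, A x y ↔ g y = g x + 1 :=
  stmt10_general σ A hsb hforb hc4

end SBD
end
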